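/- Let Γ be a weighted zero-sum network polymatrix game. Then for any exploration rates T_k > 0, Γ has a unique Quantal Response Equilibrium x̄, which is globally asymptotically stable under the smooth Q-Learning dynamics: every interior solution converges to x̄. -/

import Mathlib

open Filter Topology

noncomputable section

/-- Joint strategy space. -/
abbrev Strat {N : ℕ} (n : Fin N → ℕ) := ∀ k, Fin (n k) → ℝ

/-- `x` lies in `Δ = Δ₁ × ⋯ × Δ_N`. -/
def JointSimplex {N : ℕ} {n : Fin N → ℕ} (x : Strat n) : Prop :=
  ∀ k, x k ∈ stdSimplex ℝ (Fin (n k))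

/-- `x` lies in the interior of `Δ`. -/
def JointInterior {N : ℕ} {n : Fin N → ℕ} (x : Strat n) : Prop :=
  ∀ k, (∀ i, 0 < x k i) ∧ ∑ i, x k i = 1

/-- Reward vector of player `k` in the network polymatrix game with edge set `E`
and payoff matrices `A`: `r_k(x) = Σ_{(k,l)∈E} A^{kl} x_l`. -/
def polyReward {N : ℕ} {n : Fin N → ℕ} (E : Finset (Fin N × Fin N))
    (A : ∀ k l, Matrix (Fin (n k)) (Fin (n l)) ℝ) : Strat n → Strat n :=
  fun x k i => ∑ l ∈ Finset.univ.filter (fun l => (k, l) ∈ E), ∑ j, A k l i j * x l j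

/-- Quantal Response Equilibrium. -/
def IsQRE {N : ℕ} {n : Fin N → ℕ} (r : Strat n → Strat n) (T : Fin N → ℝ) (x : Strat n) : Prop :=
  JointSimplex x ∧
    ∀ k i, x k i = Real.exp (r x k i / T k) / ∑ j, Real.exp (r x k j / T k)

/-- An interior solution of the smooth Q-Learning dynamics. -/
def QLSolution {N : ℕ} {n : Fin N → ℕ} (r : Strat n → Strat n) (T : Fin N → ℝ)
    (x : ℝ → Strat n) : Prop :=
  (∀ t, JointInterior (x t)) ∧
    ∀ t k i, HasDerivAt (fun s => x s k i)
      (x t k i * (r (x t) k i - (∑ j, x t k j * r (x t) k j)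
        - T k * (Real.log (x t k i) - ∑ j, x t k j * Real.log (x t k j)))) t

/-!
For the entropy-regularised pairing `Φ(x, y) = ∑ₖ wₖ ⟪xₖ, rₖ(y)⟫ - H(x) + H(y)`, where `H` is the
`wₖ Tₖ`-weighted negative entropy, the Gibbs variational principle gives `maxₓ Φ(x, y) = Φ(σ y, y)`
for the logit response `σ`, the gap being a weighted relative entropy. `Φ` vanishes on the diagonal
(zero sum) and is convex in `y`, so a minimiser `y` of `maxₓ Φ(·, y)` over the compact convex `Δ`
has `maxₓ Φ(x, y) ≤ Φ(σ y, σ y) = 0 = Φ(y, y)`; hence `y = σ y` is a QRE `x̄`.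

Along a Q-learning trajectory, `V = ∑ₖ wₖ KL(x̄ₖ ‖ xₖ)` satisfies
`V' = -∑ₖ wₖ Tₖ (KL(x̄ₖ ‖ xₖ) + KL(xₖ ‖ x̄ₖ)) ≤ -(minₖ Tₖ) V`, the payoff terms cancelling by the
weighted zero-sum property. So `V → 0`, and the Hellinger bound `∑ᵢ (√qᵢ - √pᵢ)² ≤ KL(p ‖ q)`
turns this into `x → x̄`. The same identity at a second QRE `y`, where the drift vanishes, forces
`y = x̄`.
-/

open Real

section RelEntropy

/-- `log u ≤ 2 (√u - 1)` at `u = q / p`. -/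
lemma sq_sqrt_sub_sqrt_le {p q : ℝ} (hp : 0 ≤ p) (hq : 0 < q) :
    (√q - √p) ^ 2 ≤ p * (log p - log q) - p + q := by
  rcases hp.eq_or_lt with rfl | hp
  · simp [sq_sqrt hq.le]
  have hlog : log (√q / √p) ≤ √q / √p - 1 := log_le_sub_one_of_pos (by positivity)
  rw [log_div (by positivity) (by positivity), log_sqrt hq.le, log_sqrt hp.le] at hlog
  have hmul : p * (log q - log p) ≤ 2 * (√q * √p - p) := by
    have h2 : 2 * p * (√q / √p - 1) = 2 * (√q * √p - p) := by
      field_simp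
      linear_combination -√q * mul_self_sqrt hp.le
    nlinarith [mul_le_mul_of_nonneg_left hlog (by positivity : (0 : ℝ) ≤ 2 * p)]
  nlinarith [sq_sqrt hp.le, sq_sqrt hq.le]

variable {ι : Type*} [Fintype ι]

def relEntropy (p q : ι → ℝ) : ℝ := ∑ i, p i * (log (p i) - log (q i))

lemma sum_sq_sqrt_sub_sqrt_le_relEntropy {p q : ι → ℝ} (hp : ∀ i, 0 ≤ p i)
    (hq : ∀ i, 0 < q i) (hpq : ∑ i, p i = ∑ i, q i) :
    ∑ i, (√(q i) - √(p i)) ^ 2 ≤ relEntropy p q := by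
  calc ∑ i, (√(q i) - √(p i)) ^ 2
      ≤ ∑ i, (p i * (log (p i) - log (q i)) - p i + q i) :=
        Finset.sum_le_sum fun i _ => sq_sqrt_sub_sqrt_le (hp i) (hq i)
    _ = relEntropy p q := by
        simp only [Finset.sum_add_distrib, Finset.sum_sub_distrib, hpq, relEntropy]; ring

lemma relEntropy_nonneg {p q : ι → ℝ} (hp : ∀ i, 0 ≤ p i) (hq : ∀ i, 0 < q i)
    (hpq : ∑ i, p i = ∑ i, q i) : 0 ≤ relEntropy p q :=
  (Finset.sum_nonneg fun _ _ => sq_nonneg _).trans (sum_sq_sqrt_sub_sqrt_le_relEntropy hp hq hpq)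

lemma eq_of_relEntropy_eq_zero {p q : ι → ℝ} (hp : ∀ i, 0 ≤ p i) (hq : ∀ i, 0 < q i)
    (hpq : ∑ i, p i = ∑ i, q i) (h : relEntropy p q = 0) : p = q := by
  have hsq := sum_sq_sqrt_sub_sqrt_le_relEntropy hp hq hpq
  rw [h] at hsq
  funext i
  have hi := (Finset.sum_eq_zero_iff_of_nonneg fun _ _ => sq_nonneg _).1
    (hsq.antisymm (Finset.sum_nonneg fun _ _ => sq_nonneg _)) i (Finset.mem_univ i)
  exact ((sqrt_inj (hq i).le (hp i)).1 (sub_eq_zero.1 (pow_eq_zero_iff two_ne_zero |>.1 hi))).symm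

@[simp]
lemma relEntropy_self (p : ι → ℝ) : relEntropy p p = 0 := by simp [relEntropy]

lemma sum_sub_mul_log_sub_log (p q : ι → ℝ) :
    ∑ i, (p i - q i) * (log (p i) - log (q i)) = relEntropy p q + relEntropy q p := by
  rw [relEntropy, relEntropy, ← Finset.sum_add_distrib]
  exact Finset.sum_congr rfl fun i _ => by ring

end RelEntropy

section Softmax

variable {ι : Type*} [Fintype ι]

def softmax (c : ι → ℝ) (T : ℝ) (i : ι) : ℝ := exp (c i / T) / ∑ j, exp (c j / T)

variable (c : ι → ℝ) (T : ℝ)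

lemma sum_exp_div_pos [Nonempty ι] : 0 < ∑ j, exp (c j / T) :=
  Finset.sum_pos (fun _ _ => exp_pos _) Finset.univ_nonempty

lemma softmax_pos (i : ι) : 0 < softmax c T i :=
  have : Nonempty ι := ⟨i⟩
  div_pos (exp_pos _) (sum_exp_div_pos c T)

lemma sum_softmax [Nonempty ι] : ∑ i, softmax c T i = 1 := by
  simp only [softmax, ← Finset.sum_div, div_self (sum_exp_div_pos c T).ne']

lemma mul_log_softmax {T : ℝ} (hT : T ≠ 0) (i : ι) :
    T * log (softmax c T i) = c i - T * log (∑ j, exp (c j / T)) := by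
  have : Nonempty ι := ⟨i⟩
  rw [softmax, log_div (exp_ne_zero _) (sum_exp_div_pos c T).ne', log_exp]
  field_simp

lemma mul_relEntropy_softmax {T : ℝ} (hT : T ≠ 0) {p : ι → ℝ} (hp : ∑ i, p i = 1) :
    T * relEntropy p (softmax c T)
      = T * log (∑ j, exp (c j / T)) - (∑ i, p i * c i - T * ∑ i, p i * log (p i)) := by
  have h : ∀ i, T * (p i * (log (p i) - log (softmax c T i)))
      = T * (p i * log (p i)) - p i * c i + p i * (T * log (∑ j, exp (c j / T))) := by
    intro i
    linear_combination (-p i) * mul_log_softmax c hT i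
  simp only [relEntropy, Finset.mul_sum, h, Finset.sum_add_distrib, Finset.sum_sub_distrib,
    ← Finset.sum_mul, hp]
  ring

lemma sum_sub_mul_eq_mul_sum_sub_mul_log_softmax {T : ℝ} (hT : T ≠ 0) {p q : ι → ℝ}
    (hpq : ∑ i, p i = ∑ i, q i) :
    ∑ i, (p i - q i) * c i = T * ∑ i, (p i - q i) * log (softmax c T i) := by
  have h : ∀ i, T * ((p i - q i) * log (softmax c T i))
      = (p i - q i) * c i - (p i - q i) * (T * log (∑ j, exp (c j / T))) := by
    intro i
    linear_combination (p i - q i) * mul_log_softmax c hT i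
  simp only [Finset.mul_sum, h, Finset.sum_sub_distrib, ← Finset.sum_mul, hpq, sub_self,
    zero_mul, sub_zero]

end Softmax

section Game

variable {N : ℕ} {n : Fin N → ℕ} (E : Finset (Fin N × Fin N))
  (A : ∀ k l, Matrix (Fin (n k)) (Fin (n l)) ℝ)

lemma polyReward_add_smul (a b : ℝ) (x y : Strat n) (k : Fin N) (i : Fin (n k)) :
    polyReward E A (a • x + b • y) k i = a * polyReward E A x k i + b * polyReward E A y k i := by
  simp only [polyReward, Pi.add_apply, Pi.smul_apply, smul_eq_mul, mul_add, Finset.mul_sum,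
    Finset.sum_add_distrib]
  congr 1 <;> exact Finset.sum_congr rfl fun l _ => Finset.sum_congr rfl fun j _ => by ring

def weightedPairing (w : Fin N → ℝ) (x y : Strat n) : ℝ :=
  ∑ k, w k * ∑ i, x k i * polyReward E A y k i

def IsWeightedZeroSum (w : Fin N → ℝ) : Prop :=
  ∀ x : Strat n, JointSimplex x → weightedPairing E A w x x = 0

variable {E A} {w : Fin N → ℝ}

lemma weightedPairing_add_smul_left (a b : ℝ) (x y z : Strat n) :
    weightedPairing E A w (a • x + b • y) z
      = a * weightedPairing E A w x z + b * weightedPairing E A w y z := by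
  simp only [weightedPairing, Pi.add_apply, Pi.smul_apply, smul_eq_mul, add_mul,
    Finset.sum_add_distrib, mul_add, Finset.mul_sum]
  congr 1 <;> exact Finset.sum_congr rfl fun l _ => Finset.sum_congr rfl fun j _ => by ring

lemma weightedPairing_sub_left (x y z : Strat n) :
    weightedPairing E A w (x - y) z = weightedPairing E A w x z - weightedPairing E A w y z := by
  simp only [weightedPairing, Pi.sub_apply, sub_mul, Finset.sum_sub_distrib, mul_sub]

lemma weightedPairing_add_smul_right (a b : ℝ) (x y z : Strat n) :
    weightedPairing E A w x (a • y + b • z)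
      = a * weightedPairing E A w x y + b * weightedPairing E A w x z := by
  simp only [weightedPairing, polyReward_add_smul, mul_add, Finset.sum_add_distrib, Finset.mul_sum]
  congr 1 <;> exact Finset.sum_congr rfl fun l _ => Finset.sum_congr rfl fun j _ => by ring

lemma setOf_jointSimplex :
    {x : Strat n | JointSimplex x} = Set.univ.pi fun k => stdSimplex ℝ (Fin (n k)) := by
  ext x
  simp [JointSimplex]

lemma convex_setOf_jointSimplex : Convex ℝ {x : Strat n | JointSimplex x} := by
  rw [setOf_jointSimplex]
  exact convex_pi fun k _ => convex_stdSimplex ℝ _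

lemma isCompact_setOf_jointSimplex : IsCompact {x : Strat n | JointSimplex x} := by
  rw [setOf_jointSimplex]
  exact isCompact_univ_pi fun k => isCompact_stdSimplex _ _

lemma JointInterior.jointSimplex {y : Strat n} (hy : JointInterior y) : JointSimplex y :=
  fun k => ⟨fun i => ((hy k).1 i).le, (hy k).2⟩

/-- Expand `⟪m, m⟫ = 0` at the midpoint `m` of `x` and `y`. -/
lemma IsWeightedZeroSum.weightedPairing_add_weightedPairing_swap
    (hzs : IsWeightedZeroSum E A w) {x y : Strat n} (hx : JointSimplex x) (hy : JointSimplex y) :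
    weightedPairing E A w x y + weightedPairing E A w y x = 0 := by
  have hm := hzs _ (convex_setOf_jointSimplex hx hy (by norm_num : (0 : ℝ) ≤ 1 / 2)
    (by norm_num : (0 : ℝ) ≤ 1 / 2) (by norm_num))
  simp only [weightedPairing_add_smul_left, weightedPairing_add_smul_right, hzs x hx,
    hzs y hy] at hm
  linarith

end Game

section QRE

variable {N : ℕ} {n : Fin N → ℕ} {r : Strat n → Strat n} {T : Fin N → ℝ} {x : Strat n}

def qlDrift (r : Strat n → Strat n) (T : Fin N → ℝ) (y : Strat n) (k : Fin N) (i : Fin (n k)) :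
    ℝ :=
  r y k i - ∑ j, y k j * r y k j - T k * (log (y k i) - ∑ j, y k j * log (y k j))

lemma qlDrift_eq (y : Strat n) (k : Fin N) (i : Fin (n k)) :
    qlDrift r T y k i
      = r y k i - T k * log (y k i) - ∑ j, y k j * (r y k j - T k * log (y k j)) := by
  simp only [qlDrift, mul_sub, Finset.sum_sub_distrib, Finset.mul_sum, mul_left_comm (y k _)]
  ring

lemma sum_mul_qlDrift (y : Strat n) (k : Fin N) {p : Fin (n k) → ℝ} (hp : ∑ i, p i = 1) :
    ∑ i, p i * qlDrift r T y k i = ∑ i, (p i - y k i) * (r y k i - T k * log (y k i)) := by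
  simp only [qlDrift_eq, mul_sub, Finset.sum_sub_distrib, ← Finset.sum_mul, hp, one_mul, sub_mul]
  ring

lemma IsQRE.eq_softmax (hx : IsQRE r T x) (k : Fin N) : x k = softmax (r x k) (T k) :=
  funext (hx.2 k)

lemma IsQRE.jointInterior (hx : IsQRE r T x) : JointInterior x := fun k =>
  ⟨fun i => hx.eq_softmax k ▸ softmax_pos _ _ i, (hx.1 k).2⟩

lemma IsQRE.sum_sub_mul_eq (hT : ∀ k, 0 < T k) (hx : IsQRE r T x) (k : Fin N)
    {z : Fin (n k) → ℝ} (hz : ∑ i, z i = 1) :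
    ∑ i, (x k i - z i) * r x k i = T k * ∑ i, (x k i - z i) * log (x k i) := by
  have := sum_sub_mul_eq_mul_sum_sub_mul_log_softmax (r x k) (hT k).ne'
    (p := x k) (q := z) (by rw [(hx.1 k).2, hz])
  rwa [← hx.eq_softmax k] at this

/-- At a QRE every `rₖᵢ - Tₖ log xₖᵢ` equals `Tₖ log Zₖ`, so the centred drift vanishes. -/
lemma IsQRE.qlDrift_eq_zero (hT : ∀ k, 0 < T k) (hx : IsQRE r T x) (k : Fin N)
    (i : Fin (n k)) : qlDrift r T x k i = 0 := by
  have hconst : ∀ j, r x k j - T k * log (x k j) = T k * log (∑ j, exp (r x k j / T k)) := by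
    intro j
    rw [hx.eq_softmax k, mul_log_softmax _ (hT k).ne']
    ring
  simp only [qlDrift_eq, hconst, ← Finset.sum_mul, (hx.1 k).2, one_mul, sub_self]

end QRE

section WeightedRelEntropy

variable {N : ℕ} {n : Fin N → ℕ} {c : Fin N → ℝ} {x y : Strat n}

def weightedRelEntropy (c : Fin N → ℝ) (x y : Strat n) : ℝ := ∑ k, c k * relEntropy (x k) (y k)

lemma relEntropy_nonneg_of_jointInterior (hx : JointSimplex x) (hy : JointInterior y) (k : Fin N) :
    0 ≤ relEntropy (x k) (y k) :=
  relEntropy_nonneg (hx k).1 (hy k).1 (by rw [(hx k).2, (hy k).2])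

lemma weightedRelEntropy_nonneg (hc : ∀ k, 0 ≤ c k) (hx : JointSimplex x)
    (hy : JointInterior y) : 0 ≤ weightedRelEntropy c x y :=
  Finset.sum_nonneg fun k _ => mul_nonneg (hc k) (relEntropy_nonneg_of_jointInterior hx hy k)

lemma eq_of_weightedRelEntropy_eq_zero (hc : ∀ k, 0 < c k) (hx : JointSimplex x)
    (hy : JointInterior y) (h : weightedRelEntropy c x y = 0) : x = y := by
  funext k
  have hk := (Finset.sum_eq_zero_iff_of_nonneg fun k _ => mul_nonneg (hc k).le
    (relEntropy_nonneg_of_jointInterior hx hy k)).1 h k (Finset.mem_univ k)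
  exact eq_of_relEntropy_eq_zero (hx k).1 (hy k).1 (by rw [(hx k).2, (hy k).2])
    ((mul_eq_zero.1 hk).resolve_left (hc k).ne')

lemma mul_sq_sqrt_sub_sqrt_le_weightedRelEntropy (hc : ∀ k, 0 ≤ c k) (hx : JointSimplex x)
    (hy : JointInterior y) (k : Fin N) (i : Fin (n k)) :
    c k * (√(y k i) - √(x k i)) ^ 2 ≤ weightedRelEntropy c x y := by
  calc c k * (√(y k i) - √(x k i)) ^ 2
      ≤ c k * relEntropy (x k) (y k) := by
        refine mul_le_mul_of_nonneg_left ?_ (hc k)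
        refine (Finset.single_le_sum (fun j _ => sq_nonneg (√(y k j) - √(x k j)))
          (Finset.mem_univ i)).trans ?_
        exact sum_sq_sqrt_sub_sqrt_le_relEntropy (hx k).1 (hy k).1 (by rw [(hx k).2, (hy k).2])
    _ ≤ weightedRelEntropy c x y :=
        Finset.single_le_sum (f := fun k => c k * relEntropy (x k) (y k))
          (fun k _ => mul_nonneg (hc k) (relEntropy_nonneg_of_jointInterior hx hy k))
          (Finset.mem_univ k)

lemma tendsto_of_weightedRelEntropy_tendsto_zero {α : Type*} {l : Filter α} (hc : ∀ k, 0 < c k)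
    {xb : Strat n} (hxb : JointSimplex xb) {x : α → Strat n} (hx : ∀ a, JointInterior (x a))
    (h : Tendsto (fun a => weightedRelEntropy c xb (x a)) l (𝓝 0)) : Tendsto x l (𝓝 xb) := by
  refine tendsto_pi_nhds.2 fun k => tendsto_pi_nhds.2 fun i => ?_
  have hsq : Tendsto (fun a => (√(x a k i) - √(xb k i)) ^ 2) l (𝓝 0) := by
    refine squeeze_zero (fun a => sq_nonneg _) (fun a => ?_) (by simpa using h.div_const (c k))
    rw [le_div_iff₀' (hc k)]
    exact mul_sq_sqrt_sub_sqrt_le_weightedRelEntropy (fun k => (hc k).le) hxb (hx a) k i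
  have habs : Tendsto (fun a => |√(x a k i) - √(xb k i)|) l (𝓝 0) := by
    simpa [Function.comp_def, sqrt_sq_eq_abs] using (continuous_sqrt.tendsto 0).comp hsq
  have hsqrt : Tendsto (fun a => √(x a k i)) l (𝓝 (√(xb k i))) :=
    tendsto_sub_nhds_zero_iff.1 ((tendsto_zero_iff_abs_tendsto_zero _).2 habs)
  simpa [sq_sqrt ((hx _ k).1 i).le, sq_sqrt ((hxb k).1 i)] using hsqrt.pow 2

end WeightedRelEntropy

section Lyapunov

variable {N : ℕ} {n : Fin N → ℕ} {E : Finset (Fin N × Fin N)}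
  {A : ∀ k l, Matrix (Fin (n k)) (Fin (n l)) ℝ} {w T : Fin N → ℝ} {xb : Strat n}

/-- The payoff terms cancel by antisymmetry of the weighted pairing. -/
theorem IsQRE.sum_mul_sum_mul_qlDrift (hzs : IsWeightedZeroSum E A w) (hT : ∀ k, 0 < T k)
    (hxb : IsQRE (polyReward E A) T xb) {y : Strat n} (hy : JointInterior y) :
    ∑ k, w k * ∑ i, xb k i * qlDrift (polyReward E A) T y k i
      = weightedRelEntropy (w * T) xb y + weightedRelEntropy (w * T) y xb := by
  have hterm : ∀ k, w k * ∑ i, xb k i * qlDrift (polyReward E A) T y k i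
        - w k * T k * (relEntropy (xb k) (y k) + relEntropy (y k) (xb k))
      = w k * ∑ i, (xb k i - y k i) * polyReward E A y k i
        - w k * ∑ i, (xb k i - y k i) * polyReward E A xb k i := by
    intro k
    rw [sum_mul_qlDrift y k (hxb.1 k).2, ← sum_sub_mul_log_sub_log,
      hxb.sum_sub_mul_eq hT k (hy k).2]
    simp only [mul_sub (xb k _ - y k _), Finset.sum_sub_distrib, mul_left_comm _ (T k),
      ← Finset.mul_sum]
    ring
  simp only [weightedRelEntropy, Pi.mul_apply, ← Finset.sum_add_distrib, ← mul_add]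
  rw [← sub_eq_zero, ← Finset.sum_sub_distrib, Finset.sum_congr rfl fun k _ => hterm k,
    Finset.sum_sub_distrib]
  change weightedPairing E A w (xb - y) y - weightedPairing E A w (xb - y) xb = 0
  rw [weightedPairing_sub_left, weightedPairing_sub_left, hzs y hy.jointSimplex, hzs xb hxb.1]
  linarith [hzs.weightedPairing_add_weightedPairing_swap hxb.1 hy.jointSimplex]

theorem IsQRE.eq_of_isQRE (hzs : IsWeightedZeroSum E A w) (hw : ∀ k, 0 < w k)
    (hT : ∀ k, 0 < T k) (hxb : IsQRE (polyReward E A) T xb) {y : Strat n}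
    (hy : IsQRE (polyReward E A) T y) : y = xb := by
  have h := hxb.sum_mul_sum_mul_qlDrift hzs hT hy.jointInterior
  simp only [hy.qlDrift_eq_zero hT, mul_zero, Finset.sum_const_zero] at h
  have hc : ∀ k, 0 < (w * T) k := fun k => mul_pos (hw k) (hT k)
  have h1 := weightedRelEntropy_nonneg (fun k => (hc k).le) hxb.1 hy.jointInterior
  have h2 := weightedRelEntropy_nonneg (fun k => (hc k).le) hy.1 hxb.jointInterior
  exact eq_of_weightedRelEntropy_eq_zero hc hy.1 hxb.jointInterior (by linarith)

end Lyapunov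

section Convergence

lemma exists_pos_forall_le {ι : Type*} [Finite ι] {f : ι → ℝ} (hf : ∀ i, 0 < f i) :
    ∃ c > 0, ∀ i, c ≤ f i := by
  rcases isEmpty_or_nonempty ι with hι | hι
  · exact ⟨1, one_pos, isEmptyElim⟩
  · obtain ⟨i, hi⟩ := Finite.exists_min f
    exact ⟨f i, hf i, hi⟩

/-- Grönwall's inequality gives `V t ≤ V 0 * exp (-c t)`. -/
lemma tendsto_zero_of_hasDerivAt_le_neg_mul {V V' : ℝ → ℝ} {c : ℝ} (hc : 0 < c)
    (hV : ∀ t, HasDerivAt V (V' t) t) (hV' : ∀ t, V' t ≤ -c * V t) (hV0 : ∀ t, 0 ≤ V t) :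
    Tendsto V atTop (𝓝 0) := by
  have hbound : ∀ t, 0 ≤ t → V t ≤ V 0 * exp (-(c * t)) := by
    intro t ht
    have := le_gronwallBound_of_liminf_deriv_right_le (δ := V 0) (K := -c) (ε := 0) (b := t)
      (fun s _ => (hV s).continuousAt.continuousWithinAt)
      (fun s _ r hr => (hV s).hasDerivWithinAt.liminf_right_slope_le hr) le_rfl
      (fun s _ => by simpa using hV' s) t ⟨ht, le_rfl⟩
    simpa [gronwallBound_ε0] using this
  have hexp : Tendsto (fun t => V 0 * exp (-(c * t))) atTop (𝓝 0) := by
    simpa using (tendsto_exp_neg_atTop_nhds_zero.comp (tendsto_id.const_mul_atTop hc)).const_mul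
      (V 0)
  exact tendsto_of_tendsto_of_tendsto_of_le_of_le' tendsto_const_nhds hexp
    (Eventually.of_forall hV0) (eventually_atTop.2 ⟨0, hbound⟩)

variable {N : ℕ} {n : Fin N → ℕ} {r : Strat n → Strat n} {T : Fin N → ℝ} {x : ℝ → Strat n}

lemma QLSolution.hasDerivAt_log (hx : QLSolution r T x) (t : ℝ) (k : Fin N) (i : Fin (n k)) :
    HasDerivAt (fun s => log (x s k i)) (qlDrift r T (x t) k i) t := by
  have hpos := (hx.1 t k).1 i
  simpa [qlDrift, mul_div_cancel_left₀ _ hpos.ne'] using (hx.2 t k i).log hpos.ne'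

lemma QLSolution.hasDerivAt_weightedRelEntropy (hx : QLSolution r T x) (c : Fin N → ℝ)
    (p : Strat n) (t : ℝ) :
    HasDerivAt (fun s => weightedRelEntropy c p (x s))
      (-∑ k, c k * ∑ i, p k i * qlDrift r T (x t) k i) t := by
  have := HasDerivAt.fun_sum (u := Finset.univ) fun k _ =>
    (HasDerivAt.fun_sum (u := Finset.univ) fun i _ =>
      ((hx.hasDerivAt_log t k i).const_sub (log (p k i))).const_mul (p k i)).const_mul (c k)
  simpa [weightedRelEntropy, relEntropy] using this

theorem QLSolution.tendsto_of_isQRE {E : Finset (Fin N × Fin N)}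
    {A : ∀ k l, Matrix (Fin (n k)) (Fin (n l)) ℝ} {w : Fin N → ℝ} {xb : Strat n}
    (hzs : IsWeightedZeroSum E A w) (hw : ∀ k, 0 < w k) (hT : ∀ k, 0 < T k)
    (hxb : IsQRE (polyReward E A) T xb) (hx : QLSolution (polyReward E A) T x) :
    Tendsto x atTop (𝓝 xb) := by
  obtain ⟨c, hc, hcT⟩ := exists_pos_forall_le hT
  refine tendsto_of_weightedRelEntropy_tendsto_zero hw hxb.1 hx.1 <|
    tendsto_zero_of_hasDerivAt_le_neg_mul hc (hx.hasDerivAt_weightedRelEntropy w xb)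
      (fun t => ?_) (fun t => weightedRelEntropy_nonneg (fun k => (hw k).le) hxb.1 (hx.1 t))
  rw [hxb.sum_mul_sum_mul_qlDrift hzs hT (hx.1 t)]
  have hrate : c * weightedRelEntropy w xb (x t) ≤ weightedRelEntropy (w * T) xb (x t) := by
    rw [weightedRelEntropy, Finset.mul_sum]
    refine Finset.sum_le_sum fun k _ => ?_
    have hKL := relEntropy_nonneg_of_jointInterior hxb.1 (hx.1 t) k
    have hwc := mul_le_mul_of_nonneg_left (hcT k) (hw k).le
    simp only [Pi.mul_apply]
    nlinarith
  have hback : 0 ≤ weightedRelEntropy (w * T) (x t) xb :=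
    weightedRelEntropy_nonneg (fun k => (mul_pos (hw k) (hT k)).le) (hx.1 t).jointSimplex
      hxb.jointInterior
  linarith

end Convergence

section Existence

variable {N : ℕ} {n : Fin N → ℕ} (E : Finset (Fin N × Fin N))
  (A : ∀ k l, Matrix (Fin (n k)) (Fin (n l)) ℝ) (w T : Fin N → ℝ)

def logitResponse (y : Strat n) : Strat n := fun k => softmax (polyReward E A y k) (T k)

def weightedNegEntropy (c : Fin N → ℝ) (x : Strat n) : ℝ :=
  ∑ k, c k * ∑ i, x k i * log (x k i)

/-- The entropy-regularised symmetric zero-sum game between `x` and `y`. -/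
def regPairing (x y : Strat n) : ℝ :=
  weightedPairing E A w x y - weightedNegEntropy (w * T) x + weightedNegEntropy (w * T) y

def regPairingMax (y : Strat n) : ℝ :=
  ∑ k, w k * T k * log (∑ j, exp (polyReward E A y k j / T k)) + weightedNegEntropy (w * T) y

variable {E A w T} {x y : Strat n}

lemma logitResponse_jointInterior (hn : ∀ k, 0 < n k) (y : Strat n) :
    JointInterior (logitResponse E A T y) := fun k =>
  have := Fin.pos_iff_nonempty.mp (hn k)
  ⟨softmax_pos _ _, sum_softmax _ _⟩

lemma regPairingMax_sub_regPairing (hT : ∀ k, T k ≠ 0) (hx : JointSimplex x) (y : Strat n) :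
    regPairingMax E A w T y - regPairing E A w T x y
      = weightedRelEntropy (w * T) x (logitResponse E A T y) := by
  simp only [regPairingMax, regPairing, weightedPairing, weightedNegEntropy, weightedRelEntropy,
    logitResponse, Pi.mul_apply, mul_assoc, mul_relEntropy_softmax _ (hT _) (hx _).2, mul_sub,
    Finset.sum_sub_distrib]
  ring

lemma regPairing_le_regPairingMax (hn : ∀ k, 0 < n k) (hw : ∀ k, 0 < w k) (hT : ∀ k, 0 < T k)
    (hx : JointSimplex x) (y : Strat n) : regPairing E A w T x y ≤ regPairingMax E A w T y := by
  have := weightedRelEntropy_nonneg (c := w * T) (fun k => (mul_pos (hw k) (hT k)).le) hx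
    (logitResponse_jointInterior (E := E) (A := A) (T := T) hn y)
  linarith [regPairingMax_sub_regPairing (E := E) (A := A) (w := w) (fun k => (hT k).ne') hx y]

lemma eq_logitResponse_of_regPairing_eq (hn : ∀ k, 0 < n k) (hw : ∀ k, 0 < w k)
    (hT : ∀ k, 0 < T k) (hx : JointSimplex x)
    (h : regPairing E A w T x y = regPairingMax E A w T y) : x = logitResponse E A T y := by
  have hgap := regPairingMax_sub_regPairing (E := E) (A := A) (w := w) (fun k => (hT k).ne') hx y
  exact eq_of_weightedRelEntropy_eq_zero (c := w * T) (fun k => mul_pos (hw k) (hT k)) hx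
    (logitResponse_jointInterior hn y) (by linarith)

lemma regPairing_logitResponse (hn : ∀ k, 0 < n k) (hT : ∀ k, 0 < T k) (y : Strat n) :
    regPairing E A w T (logitResponse E A T y) y = regPairingMax E A w T y := by
  have := regPairingMax_sub_regPairing (E := E) (A := A) (w := w) (fun k => (hT k).ne')
    (logitResponse_jointInterior (E := E) (A := A) (T := T) hn y).jointSimplex y
  simp only [weightedRelEntropy, relEntropy_self, mul_zero, Finset.sum_const_zero] at this
  linarith

lemma IsWeightedZeroSum.regPairing_self (hzs : IsWeightedZeroSum E A w) (hx : JointSimplex x) :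
    regPairing E A w T x x = 0 := by
  simp [regPairing, hzs x hx]

lemma convexOn_weightedNegEntropy {c : Fin N → ℝ} (hc : ∀ k, 0 ≤ c k) :
    ConvexOn ℝ {x : Strat n | JointSimplex x} (weightedNegEntropy c) := by
  refine ⟨convex_setOf_jointSimplex, fun y₀ h₀ y₁ h₁ a b ha hb hab => ?_⟩
  calc weightedNegEntropy c (a • y₀ + b • y₁)
      ≤ ∑ k, c k * ∑ i, (a * (y₀ k i * log (y₀ k i)) + b * (y₁ k i * log (y₁ k i))) := by
        refine Finset.sum_le_sum fun k _ => mul_le_mul_of_nonneg_left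
          (Finset.sum_le_sum fun i _ => ?_) (hc k)
        exact convexOn_mul_log.2 ((h₀ k).1 i) ((h₁ k).1 i) ha hb hab
    _ = a • weightedNegEntropy c y₀ + b • weightedNegEntropy c y₁ := by
        simp only [weightedNegEntropy, smul_eq_mul, Finset.sum_add_distrib, mul_add,
          Finset.mul_sum]
        congr 1 <;> exact Finset.sum_congr rfl fun k _ => Finset.sum_congr rfl fun i _ => by ring

lemma convexOn_regPairing (hw : ∀ k, 0 < w k) (hT : ∀ k, 0 < T k) (x : Strat n) :
    ConvexOn ℝ {y : Strat n | JointSimplex y} (regPairing E A w T x) := by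
  refine ⟨convex_setOf_jointSimplex, fun y₀ h₀ y₁ h₁ a b ha hb hab => ?_⟩
  have hH := (convexOn_weightedNegEntropy (c := w * T) fun k => (mul_pos (hw k) (hT k)).le).2
    h₀ h₁ ha hb hab
  have hsplit : a * weightedNegEntropy (w * T) x + b * weightedNegEntropy (w * T) x
      = weightedNegEntropy (w * T) x := by rw [← add_mul, hab, one_mul]
  simp only [regPairing, weightedPairing_add_smul_right, smul_eq_mul] at hH ⊢
  linarith

lemma continuous_logitResponse (hn : ∀ k, 0 < n k) : Continuous (logitResponse E A T) := by
  refine continuous_pi fun k => continuous_pi fun i => ?_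
  have := Fin.pos_iff_nonempty.mp (hn k)
  simp only [logitResponse, softmax]
  exact Continuous.div (by unfold polyReward; fun_prop) (by unfold polyReward; fun_prop)
    fun y => (sum_exp_div_pos _ _).ne'

lemma continuous_regPairingMax (hn : ∀ k, 0 < n k) : Continuous (regPairingMax E A w T) := by
  refine Continuous.add (continuous_finsetSum _ fun k _ => continuous_const.mul <|
    Continuous.log (by unfold polyReward; fun_prop) fun y => ?_)
    (by unfold weightedNegEntropy; fun_prop)
  have := Fin.pos_iff_nonempty.mp (hn k)
  exact (sum_exp_div_pos _ _).ne'

lemma continuous_regPairing_left (y : Strat n) :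
    Continuous fun x => regPairing E A w T x y := by
  unfold regPairing weightedPairing weightedNegEntropy
  fun_prop

/-- Minimality at `ys` and convexity in the second argument give the bound with
`logitResponse yₜ`, `yₜ = (1 - t) • ys + t • y`, for `t ∈ (0, 1]`; then let `t → 0⁺`. -/
lemma regPairingMax_le_regPairing_of_isMinOn (hn : ∀ k, 0 < n k) (hw : ∀ k, 0 < w k)
    (hT : ∀ k, 0 < T k) {ys : Strat n} (hys : JointSimplex ys)
    (hmin : IsMinOn (regPairingMax E A w T) {y | JointSimplex y} ys) (hy : JointSimplex y) :
    regPairingMax E A w T ys ≤ regPairing E A w T (logitResponse E A T ys) y := by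
  set seg : ℝ → Strat n := fun t => (1 - t) • ys + t • y
  have hbound : ∀ t ∈ Set.Ioc (0 : ℝ) 1,
      regPairingMax E A w T ys ≤ regPairing E A w T (logitResponse E A T (seg t)) y := by
    rintro t ⟨ht₀, ht₁⟩
    set xt := logitResponse E A T (seg t)
    have hmin_t : regPairingMax E A w T ys ≤ regPairing E A w T xt (seg t) := by
      rw [regPairing_logitResponse hn hT]
      exact isMinOn_iff.1 hmin _
        (convex_setOf_jointSimplex hys hy (sub_nonneg.2 ht₁) ht₀.le (by ring))
    have hconv := (convexOn_regPairing (E := E) (A := A) hw hT xt).2 hys hy (sub_nonneg.2 ht₁)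
      ht₀.le (by ring)
    have hle : regPairing E A w T xt ys ≤ regPairingMax E A w T ys :=
      regPairing_le_regPairingMax hn hw hT (logitResponse_jointInterior hn _).jointSimplex ys
    rw [smul_eq_mul, smul_eq_mul] at hconv
    have hscaled : t * regPairingMax E A w T ys ≤ t * regPairing E A w T xt y := by
      nlinarith [mul_le_mul_of_nonneg_left hle (sub_nonneg.2 ht₁)]
    exact le_of_mul_le_mul_left hscaled ht₀
  have hcont : Continuous fun t => regPairing E A w T (logitResponse E A T (seg t)) y :=
    (continuous_regPairing_left y).comp ((continuous_logitResponse hn).comp (by fun_prop))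
  refine ge_of_tendsto ((hcont.tendsto' 0 _ (by simp [seg])).mono_left
    (nhdsWithin_le_nhds (s := Set.Ioi 0))) ?_
  filter_upwards [Ioc_mem_nhdsGT zero_lt_one] with t ht using hbound t ht

theorem exists_isQRE (hn : ∀ k, 0 < n k) (hw : ∀ k, 0 < w k) (hT : ∀ k, 0 < T k)
    (hzs : IsWeightedZeroSum E A w) : ∃ x, IsQRE (polyReward E A) T x := by
  obtain ⟨ys, hys, hmin⟩ := isCompact_setOf_jointSimplex.exists_isMinOn
    ⟨_, (logitResponse_jointInterior (E := E) (A := A) (T := T) hn 0).jointSimplex⟩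
    (continuous_regPairingMax (w := w) hn).continuousOn
  have hL := (logitResponse_jointInterior (E := E) (A := A) (T := T) hn ys).jointSimplex
  have hle := regPairingMax_le_regPairing_of_isMinOn hn hw hT hys hmin hL
  have hge := regPairing_le_regPairingMax (E := E) (A := A) (w := w) hn hw hT hys ys
  rw [hzs.regPairing_self hL] at hle
  rw [hzs.regPairing_self hys] at hge
  have hfix := eq_logitResponse_of_regPairing_eq hn hw hT hys
    (by rw [hzs.regPairing_self hys]; linarith)
  exact ⟨ys, hys, fun k i => congrFun (congrFun hfix k) i⟩

end Existence

theorem Q_learning_converges_in_weighted_zero_sum_polymatrix_games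
    {N : ℕ} {n : Fin N → ℕ} (hn : ∀ k, 0 < n k)
    (E : Finset (Fin N × Fin N))
    (A : ∀ k l, Matrix (Fin (n k)) (Fin (n l)) ℝ)
    -- the game is weighted zero-sum: Σ_k w_k u_k(x) = 0 on Δ
    (w : Fin N → ℝ) (hw : ∀ k, 0 < w k)
    (hzs : ∀ x : Strat n, JointSimplex x →
      ∑ k, w k * ∑ i, x k i * polyReward E A x k i = 0)
    (T : Fin N → ℝ) (hT : ∀ k, 0 < T k) :
    ∃ xbar : Strat n, IsQRE (polyReward E A) T xbar ∧
      (∀ y, IsQRE (polyReward E A) T y → y = xbar) ∧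
      ∀ x : ℝ → Strat n, QLSolution (polyReward E A) T x →
        Tendsto x atTop (𝓝 xbar) := by
  obtain ⟨xbar, hxbar⟩ := exists_isQRE hn hw hT hzs
  exact ⟨xbar, hxbar, fun y hy => hxbar.eq_of_isQRE hzs hw hT hy,
    fun x hx => hx.tendsto_of_isQRE hzs hw hT hxbar⟩

end
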